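/- Let β = (π_ℓ)_{ℓ=1}^L be a chainable architecture of depth L ≥ 2. Then for every s ∈ {1, …, L−1}, B^β ⊆ B^{β_s}. Consequently, for every matrix A of the appropriate size, E^β(A) ≥ max_{1 ≤ s ≤ L−1} E^{β_s}(A). -/

import Mathlib

/-- A *pattern* is a tuple `(a, b, c, d)` of (positive) natural numbers. -/
structure Pattern where
  a : ℕ
  b : ℕ
  c : ℕ
  d : ℕ

namespace Pattern

/-- The entries of a pattern are positive integers. -/
def Pos (π : Pattern) : Prop := 0 < π.a ∧ 0 < π.b ∧ 0 < π.c ∧ 0 < π.d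

/-- Number of rows `a*b*d` of a `π`-factor. -/
def rows (π : Pattern) : ℕ := π.a * π.b * π.d

/-- Number of columns `a*c*d` of a `π`-factor. -/
def cols (π : Pattern) : ℕ := π.a * π.c * π.d

/-- `r(π₁, π₂) = a₁c₁/a₂ (= b₂d₂/d₁)`. -/
def rk (π₁ π₂ : Pattern) : ℕ := π₁.a * π₁.c / π₂.a

/-- A pair of patterns is *chainable* if `a₁c₁/a₂ = b₂d₂/d₁` is a positive integer,
`a₁ ∣ a₂` and `d₂ ∣ d₁`. -/
def Chainable (π₁ π₂ : Pattern) : Prop :=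
  π₂.a ∣ π₁.a * π₁.c ∧ π₁.d ∣ π₂.b * π₂.d ∧
    π₁.a * π₁.c / π₂.a = π₂.b * π₂.d / π₁.d ∧
    0 < π₁.a * π₁.c / π₂.a ∧ π₁.a ∣ π₂.a ∧ π₂.d ∣ π₁.d

/-- `π₁ * π₂ := (a₁, b₁d₁/d₂, a₂c₂/a₁, d₂)`. -/
instance : Mul Pattern :=
  ⟨fun π₁ π₂ => ⟨π₁.a, π₁.b * π₁.d / π₂.d, π₂.a * π₂.c / π₁.a, π₂.d⟩⟩

/-- `‖π‖₀ := a*b*c*d`. -/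
def norm0 (π : Pattern) : ℕ := π.a * π.b * π.c * π.d

end Pattern

open scoped Kronecker

/-- The flattening equivalence `(Fin a × Fin b) × Fin d ≃ Fin (a*b*d)`. -/
def kron3Equiv (a b d : ℕ) : (Fin a × Fin b) × Fin d ≃ Fin (a * b * d) :=
  (finProdFinEquiv.prodCongr (Equiv.refl (Fin d))).trans finProdFinEquiv

/-- The support matrix `S_π = I_a ⊗ 1_{b×c} ⊗ I_d ∈ {0,1}^{abd × acd}`. -/
def Pattern.S (π : Pattern) : Matrix (Fin π.rows) (Fin π.cols) ℕ :=
  Matrix.reindex (kron3Equiv π.a π.b π.d) (kron3Equiv π.a π.c π.d)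
    ((1 : Matrix (Fin π.a) (Fin π.a) ℕ) ⊗ₖ
      (Matrix.of fun _ _ => (1 : ℕ) : Matrix (Fin π.b) (Fin π.c) ℕ) ⊗ₖ
      (1 : Matrix (Fin π.d) (Fin π.d) ℕ))

/-- The support matrix `S_π`, extended by zero to an `ℕ × ℕ`-indexed array. -/
def SpatN (π : Pattern) : ℕ → ℕ → ℕ := fun i j =>
  if h : i < π.rows ∧ j < π.cols then π.S ⟨i, h.1⟩ ⟨j, h.2⟩ else 0

/-- `X` is (the extension by zero of) a `π`-factor: it vanishes outside the support of `S_π`. -/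
def IsFactorN (π : Pattern) (X : ℕ → ℕ → ℂ) : Prop :=
  ∀ i j, SpatN π i j = 0 → X i j = 0

/-- Product of matrices encoded as finitely supported `ℕ × ℕ`-indexed arrays. -/
noncomputable def nmul (f g : ℕ → ℕ → ℂ) : ℕ → ℕ → ℂ := fun i j => ∑' k, f i k * g k j

/-- `nprod X k = X 0 * X 1 * ⋯ * X k`. -/
noncomputable def nprod (X : ℕ → ℕ → ℕ → ℂ) : ℕ → ℕ → ℕ → ℂ
  | 0 => X 0
  | k + 1 => nmul (nprod X k) (X (k + 1))

/-- Frobenius norm. -/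
noncomputable def nfrob (f : ℕ → ℕ → ℂ) : ℝ := Real.sqrt (∑' i, ∑' j, ‖f i j‖ ^ 2)

/-- `A` is (the extension by zero of) a matrix of size `m × n`. -/
def SuppIn (m n : ℕ) (A : ℕ → ℕ → ℂ) : Prop := ∀ i j, A i j ≠ 0 → i < m ∧ j < n

/-- The set `B^β` of butterfly matrices for the architecture `β = (π 0, …, π (L-1))`. -/
def Bset (π : ℕ → Pattern) (L : ℕ) : Set (ℕ → ℕ → ℂ) :=
  { M | ∃ X : ℕ → ℕ → ℕ → ℂ, (∀ ℓ < L, IsFactorN (π ℓ) (X ℓ)) ∧ M = nprod X (L - 1) }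

/-- The approximation error `E^β(A) = inf_{B ∈ B^β} ‖A - B‖_F`. -/
noncomputable def Eerr (π : ℕ → Pattern) (L : ℕ) (A : ℕ → ℕ → ℂ) : ℝ :=
  sInf { e : ℝ | ∃ B ∈ Bset π L, e = nfrob (A - B) }

/-- Partial products of patterns: `pprod π q k = π q * π (q+1) * ⋯ * π (q+k)`. -/
def pprod (π : ℕ → Pattern) (q : ℕ) : ℕ → Pattern
  | 0 => π q
  | k + 1 => pprod π q k * π (q + k + 1)

/-- The two-pattern architecture `(p, q)`. -/
def pairArch (p q : Pattern) : ℕ → Pattern := fun ℓ => if ℓ = 0 then p else q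

/-- The error `E^{β_s}(A)` of the split architecture
`β_s = (π 1 * ⋯ * π s, π (s+1) * ⋯ * π L)` (here `s` counts the factors in the left part). -/
noncomputable def Esplit (π : ℕ → Pattern) (L s : ℕ) (A : ℕ → ℕ → ℂ) : ℝ :=
  Eerr (pairArch (pprod π 0 (s - 1)) (pprod π s (L - 1 - s))) 2 A


/-! The product `S_{π₁} S_{π₂}` of the support matrices of a chainable pair is supported inside
`S_{π₁ * π₂}`, so a product of chainable factors is a factor of the product pattern. Grouping
the first `s` factors of an element of `B^β` and the remaining ones therefore exhibits it as an
element of `B^{β_s}`, and an infimum over a larger set is smaller. -/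

namespace Pattern

/-- Entry `(i, j)` of `S_π` indexes row block `i / (b d)` and column block `j / (c d)` of
`I_a ⊗ 1_{b×c}`, and position `i % d`, `j % d` inside `I_d`. -/
theorem spatN_ne_zero_iff (π : Pattern) (i j : ℕ) :
    SpatN π i j ≠ 0 ↔ (i < π.rows ∧ j < π.cols) ∧
      i / (π.b * π.d) = j / (π.c * π.d) ∧ i % π.d = j % π.d := by
  rw [mul_comm π.b, mul_comm π.c, ← Nat.div_div_eq_div_mul, ← Nat.div_div_eq_div_mul]
  unfold SpatN
  split
  · rename_i h
    dsimp only [rows, cols] at h ⊢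
    simp only [S, Matrix.reindex_apply, kron3Equiv, Matrix.submatrix_apply,
      Equiv.symm_trans_apply, Equiv.prodCongr_symm, Equiv.refl_symm, Equiv.prodCongr_apply,
      Equiv.coe_refl, Prod.map, finProdFinEquiv_symm_apply, Matrix.kroneckerMap_apply,
      Matrix.one_apply, Matrix.of_apply, id, Fin.ext_iff, Fin.coe_divNat, Fin.coe_modNat]
    split_ifs <;> simp_all
  · simp_all

theorem mul_rows {π₁ π₂ : Pattern} (h : π₂.d ∣ π₁.d) : (π₁ * π₂).rows = π₁.rows := by
  change π₁.a * (π₁.b * π₁.d / π₂.d) * π₂.d = π₁.a * π₁.b * π₁.d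
  rw [mul_assoc, Nat.div_mul_cancel (h.mul_left _), mul_assoc]

theorem mul_cols {π₁ π₂ : Pattern} (h : π₁.a ∣ π₂.a) : (π₁ * π₂).cols = π₂.cols := by
  change π₁.a * (π₂.a * π₂.c / π₁.a) * π₂.d = π₂.a * π₂.c * π₂.d
  rw [Nat.mul_div_cancel' (h.mul_right _)]

theorem mul_b_mul_d {π₁ π₂ : Pattern} (h : π₂.d ∣ π₁.d) :
    (π₁ * π₂).b * (π₁ * π₂).d = π₁.b * π₁.d :=
  Nat.div_mul_cancel (h.mul_left _)

theorem mul_c_mul_d {π₁ π₂ : Pattern} (h : π₁.a ∣ π₂.a) :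
    (π₁ * π₂).c * (π₁ * π₂).d = π₂.a / π₁.a * (π₂.c * π₂.d) := by
  change π₂.a * π₂.c / π₁.a * π₂.d = _
  rw [Nat.mul_div_right_comm h, mul_assoc]

theorem Chainable.c_mul_d {π₁ π₂ : Pattern} (h : Chainable π₁ π₂) (ha : 0 < π₁.a) :
    π₁.c * π₁.d = π₂.a / π₁.a * (π₂.b * π₂.d) := by
  obtain ⟨hA, hD, hr, -, ⟨e, he⟩, -⟩ := h
  set r := π₁.a * π₁.c / π₂.a
  have hac : r * π₂.a = π₁.a * π₁.c := Nat.div_mul_cancel hA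
  have hbd : r * π₁.d = π₂.b * π₂.d := by rw [hr]; exact Nat.div_mul_cancel hD
  have hc : π₁.c = r * e := Nat.eq_of_mul_eq_mul_left ha (by rw [← hac, he]; ring)
  rw [he, Nat.mul_div_cancel_left _ ha, ← hbd, hc]
  ring

theorem Chainable.spatN_mul_ne_zero {π₁ π₂ : Pattern} (h : Chainable π₁ π₂) {i k j : ℕ}
    (h₁ : SpatN π₁ i k ≠ 0) (h₂ : SpatN π₂ k j ≠ 0) : SpatN (π₁ * π₂) i j ≠ 0 := by
  obtain ⟨⟨hi, -⟩, hik, hik'⟩ := (spatN_ne_zero_iff π₁ i k).mp h₁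
  obtain ⟨⟨-, hj⟩, hkj, hkj'⟩ := (spatN_ne_zero_iff π₂ k j).mp h₂
  have ha : 0 < π₁.a := Nat.pos_of_ne_zero fun h0 => by simp [rows, h0] at hi
  have hA : π₁.a ∣ π₂.a := h.2.2.2.2.1
  have hD : π₂.d ∣ π₁.d := h.2.2.2.2.2
  refine (spatN_ne_zero_iff _ i j).mpr ⟨⟨mul_rows hD ▸ hi, mul_cols hA ▸ hj⟩, ?_, ?_⟩
  · calc i / ((π₁ * π₂).b * (π₁ * π₂).d) = k / (π₁.c * π₁.d) := by rw [mul_b_mul_d hD, hik]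
      _ = k / (π₂.b * π₂.d) / (π₂.a / π₁.a) := by
        rw [h.c_mul_d ha, Nat.div_div_eq_div_mul, mul_comm]
      _ = j / ((π₁ * π₂).c * (π₁ * π₂).d) := by
        rw [hkj, mul_c_mul_d hA, Nat.div_div_eq_div_mul, mul_comm]
  · calc i % π₂.d = k % π₂.d := by
          rw [← Nat.mod_mod_of_dvd i hD, hik', Nat.mod_mod_of_dvd k hD]
      _ = j % π₂.d := hkj'

end Pattern

/-- Bounded column support: the condition under which the `tsum`s in `nmul` are finite sums
rather than junk values. -/
def ColBounded (f : ℕ → ℕ → ℂ) : Prop := ∃ n, ∀ i k, n ≤ k → f i k = 0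

theorem nmul_apply_eq_sum {f : ℕ → ℕ → ℂ} {n : ℕ} (hf : ∀ i k, n ≤ k → f i k = 0)
    (g : ℕ → ℕ → ℂ) (i j : ℕ) :
    nmul f g i j = ∑ k ∈ Finset.range n, f i k * g k j :=
  tsum_eq_sum fun k hk => by rw [hf i k (by simpa using hk), zero_mul]

theorem ColBounded.nmul (f : ℕ → ℕ → ℂ) {g : ℕ → ℕ → ℂ} (hg : ColBounded g) :
    ColBounded (nmul f g) := by
  obtain ⟨n, hn⟩ := hg
  refine ⟨n, fun i k hk => ?_⟩
  simp [_root_.nmul, hn _ k hk]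

theorem nmul_assoc {f g : ℕ → ℕ → ℂ} (hf : ColBounded f) (hg : ColBounded g)
    (h : ℕ → ℕ → ℂ) : nmul (nmul f g) h = nmul f (nmul g h) := by
  obtain ⟨n, hn⟩ := hf
  obtain ⟨p, hp⟩ := hg
  have hfg : ∀ i k, p ≤ k → nmul f g i k = 0 := fun i k hk => by simp [nmul, hp _ k hk]
  funext i j
  simp only [nmul_apply_eq_sum hfg, nmul_apply_eq_sum hn, nmul_apply_eq_sum hp,
    Finset.sum_mul, Finset.mul_sum, mul_assoc]
  exact Finset.sum_comm

theorem colBounded_nprod {X : ℕ → ℕ → ℕ → ℂ} {k : ℕ} (h : ColBounded (X k)) :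
    ColBounded (nprod X k) := by
  cases k with
  | zero => exact h
  | succ k => exact h.nmul _

theorem nprod_add_succ (X : ℕ → ℕ → ℕ → ℂ) {m t : ℕ} (hX : ∀ ℓ ≤ m + t, ColBounded (X ℓ)) :
    nprod X (m + 1 + t) = nmul (nprod X m) (nprod (fun ℓ => X (m + 1 + ℓ)) t) := by
  induction t with
  | zero => rfl
  | succ t ih =>
    change nmul (nprod X (m + 1 + t)) (X (m + 1 + t + 1)) = _
    rw [ih fun ℓ hℓ => hX ℓ (by omega), nmul_assoc (colBounded_nprod (hX m (by omega)))
      (colBounded_nprod (X := fun ℓ => X (m + 1 + ℓ)) (hX (m + 1 + t) (by omega)))]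
    rfl

theorem IsFactorN.colBounded {π : Pattern} {X : ℕ → ℕ → ℂ} (h : IsFactorN π X) :
    ColBounded X :=
  ⟨π.cols, fun i k hk => h i k (dif_neg fun hik => absurd hik.2 (by omega))⟩

theorem IsFactorN.nmul {π₁ π₂ : Pattern} {X Y : ℕ → ℕ → ℂ} (hX : IsFactorN π₁ X)
    (hY : IsFactorN π₂ Y) (h : π₁.Chainable π₂) : IsFactorN (π₁ * π₂) (nmul X Y) := by
  intro i j hS
  have hterm : ∀ k, X i k * Y k j = 0 := fun k => by
    by_contra hne
    obtain ⟨hXik, hYkj⟩ := mul_ne_zero_iff.mp hne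
    exact h.spatN_mul_ne_zero (mt (hX i k) hXik) (mt (hY k j) hYkj) hS
  simp [_root_.nmul, hterm]

section PartialProducts

variable (π : ℕ → Pattern) (q : ℕ)

theorem pprod_a (k : ℕ) : (pprod π q k).a = (π q).a := by
  induction k with
  | zero => rfl
  | succ k ih => exact ih

theorem pprod_d (k : ℕ) : (pprod π q k).d = (π (q + k)).d := by
  cases k <;> rfl

variable {π q}

theorem a_dvd_a_of_chainable {k : ℕ}
    (hch : ∀ ℓ < k, Pattern.Chainable (π (q + ℓ)) (π (q + ℓ + 1))) :
    (π q).a ∣ (π (q + k)).a := by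
  induction k with
  | zero => exact dvd_rfl
  | succ k ih => exact (ih fun ℓ hℓ => hch ℓ (by omega)).trans (hch k (by omega)).2.2.2.2.1

theorem pprod_a_mul_c {k : ℕ}
    (hch : ∀ ℓ < k, Pattern.Chainable (π (q + ℓ)) (π (q + ℓ + 1))) :
    (pprod π q k).a * (pprod π q k).c = (π (q + k)).a * (π (q + k)).c := by
  cases k with
  | zero => rfl
  | succ k =>
    change (pprod π q k).a * ((π (q + k + 1)).a * (π (q + k + 1)).c / (pprod π q k).a) = _
    rw [pprod_a]
    exact Nat.mul_div_cancel' ((a_dvd_a_of_chainable hch).mul_right _)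

theorem chainable_pprod {k : ℕ}
    (hch : ∀ ℓ < k + 1, Pattern.Chainable (π (q + ℓ)) (π (q + ℓ + 1))) :
    Pattern.Chainable (pprod π q k) (π (q + k + 1)) := by
  obtain ⟨hA, hD, hr, hpos, -, hDd⟩ := hch k (by omega)
  unfold Pattern.Chainable
  rw [pprod_a_mul_c fun ℓ hℓ => hch ℓ (by omega), pprod_d, pprod_a]
  exact ⟨hA, hD, hr, hpos, a_dvd_a_of_chainable hch, hDd⟩

theorem isFactorN_nprod {X : ℕ → ℕ → ℕ → ℂ} {k : ℕ}
    (hch : ∀ ℓ < k, Pattern.Chainable (π (q + ℓ)) (π (q + ℓ + 1)))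
    (hX : ∀ ℓ ≤ k, IsFactorN (π (q + ℓ)) (X ℓ)) :
    IsFactorN (pprod π q k) (nprod X k) := by
  induction k with
  | zero => exact hX 0 le_rfl
  | succ k ih =>
    exact (ih (fun ℓ hℓ => hch ℓ (by omega)) fun ℓ hℓ => hX ℓ (by omega)).nmul
      (hX (k + 1) le_rfl) (chainable_pprod hch)

end PartialProducts

theorem nmul_mem_bset_pairArch {p₁ p₂ : Pattern} {X Y : ℕ → ℕ → ℂ} (hX : IsFactorN p₁ X)
    (hY : IsFactorN p₂ Y) : nmul X Y ∈ Bset (pairArch p₁ p₂) 2 := by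
  refine ⟨fun ℓ => if ℓ = 0 then X else Y, fun ℓ hℓ => ?_, rfl⟩
  interval_cases ℓ
  · simpa [pairArch] using hX
  · simpa [pairArch] using hY

theorem eerr_le_of_bset_subset {π π' : ℕ → Pattern} {L L' : ℕ}
    (h : Bset π L ⊆ Bset π' L') (A : ℕ → ℕ → ℂ) : Eerr π' L' A ≤ Eerr π L A := by
  refine csInf_le_csInf ⟨0, ?_⟩ ⟨_, _, ⟨fun _ _ _ => 0, fun _ _ _ _ _ => rfl, rfl⟩, rfl⟩ ?_
  · rintro e ⟨B, -, rfl⟩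
    exact Real.sqrt_nonneg _
  · rintro e ⟨B, hB, rfl⟩
    exact ⟨B, h hB, rfl⟩

theorem butterfly_subset_split_general (L : ℕ) (π : ℕ → Pattern)
    (hch : ∀ ℓ, ℓ + 1 < L → Pattern.Chainable (π ℓ) (π (ℓ + 1)))
    (A : ℕ → ℕ → ℂ) :
    ∀ s, 1 ≤ s → s ≤ L - 1 →
      Bset π L ⊆ Bset (pairArch (pprod π 0 (s - 1)) (pprod π s (L - 1 - s))) 2 ∧
      Esplit π L s A ≤ Eerr π L A := by
  intro s hs1 hs2
  obtain ⟨m, rfl⟩ := Nat.exists_eq_add_of_le' hs1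
  obtain ⟨t, ht⟩ : ∃ t, L - 1 - (m + 1) = t := ⟨_, rfl⟩
  have hsub : Bset π L ⊆ Bset (pairArch (pprod π 0 m) (pprod π (m + 1) t)) 2 := by
    rintro M ⟨X, hX, rfl⟩
    rw [show L - 1 = m + 1 + t by omega,
      nprod_add_succ X fun ℓ hℓ => (hX ℓ (by omega)).colBounded]
    refine nmul_mem_bset_pairArch ?_ ?_
    · exact isFactorN_nprod (fun ℓ _ => by simpa using hch ℓ (by omega))
        fun ℓ _ => by simpa using hX ℓ (by omega)
    · exact isFactorN_nprod (fun ℓ _ => hch (m + 1 + ℓ) (by omega))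
        fun ℓ _ => hX (m + 1 + ℓ) (by omega)
  rw [Esplit, Nat.add_sub_cancel, ht]
  exact ⟨hsub, eerr_le_of_bset_subset hsub A⟩

/-- **Lemma.** For a chainable architecture of depth `L ≥ 2` and every split index
`1 ≤ s ≤ L-1`, one has `B^β ⊆ B^{β_s}`; consequently `E^β(A) ≥ E^{β_s}(A)` for every
matrix `A` of the appropriate size. -/
theorem butterfly_subset_split (L : ℕ) (hL : 2 ≤ L) (π : ℕ → Pattern)
    (hPos : ∀ ℓ < L, (π ℓ).Pos)
    (hch : ∀ ℓ, ℓ + 1 < L → Pattern.Chainable (π ℓ) (π (ℓ + 1)))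
    (A : ℕ → ℕ → ℂ) (hA : SuppIn (π 0).rows (π (L - 1)).cols A) :
    ∀ s, 1 ≤ s → s ≤ L - 1 →
      Bset π L ⊆ Bset (pairArch (pprod π 0 (s - 1)) (pprod π s (L - 1 - s))) 2 ∧
      Esplit π L s A ≤ Eerr π L A :=
  butterfly_subset_split_general L π hch A
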